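/- Let A be an n×m real matrix, b ∈ ℝ^n, p ∈ [1,∞), Z = min_{x∈ℝ^m} ‖Ax − b‖_p, and let x_opt attain this minimum. Let S be a real matrix with n columns such that (7/8)·‖Ax‖_p ≤ ‖SAx‖_p for all x ∈ ℝ^m, and such that ‖S(Ax_opt − b)‖_p ≤ 3Z. If x̂_c ∈ ℝ^m satisfies ‖S(Ax̂_c − b)‖_p ≤ 3Z, then ‖Ax̂_c − b‖_p ≤ 8Z. -/

import Mathlib

open scoped BigOperators

/-- The entrywise `p`-norm of a vector: `(∑ i, |v i| ^ p) ^ (1/p)`. -/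
noncomputable def pnorm (p : ℝ) {n : ℕ} (v : Fin n → ℝ) : ℝ :=
  (∑ i, |v i| ^ p) ^ (1 / p)

/-- The dual norm of the `p`-norm: the max-norm if `p = 1`, else the `p/(p-1)`-norm. -/
noncomputable def qnorm (p : ℝ) {n : ℕ} (v : Fin n → ℝ) : ℝ :=
  if p = 1 then ⨆ i, |v i| else pnorm (p / (p - 1)) v

/-- The entrywise `p`-norm of a matrix. -/
noncomputable def mpnorm (p : ℝ) {n d : ℕ} (M : Matrix (Fin n) (Fin d) ℝ) : ℝ :=
  (∑ i, ∑ j, |M i j| ^ p) ^ (1 / p)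

/-- `U` is an `(α, β, p)`-well-conditioned basis for the column space of `A`. -/
def IsWCB (p α β : ℝ) {n m d : ℕ} (A : Matrix (Fin n) (Fin m) ℝ)
    (U : Matrix (Fin n) (Fin d) ℝ) : Prop :=
  LinearMap.range U.mulVecLin = LinearMap.range A.mulVecLin ∧
  mpnorm p U ≤ α ∧
  ∀ z : Fin d → ℝ, qnorm p z ≤ β * pnorm p (U.mulVec z)

/-- `S : Ω → Matrix` is a random `n × n` diagonal sampling matrix with probabilities `pr`:
its diagonal entries are mutually independent, with `S ω i i = (pr i) ^ (-1/p)` with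
probability `pr i` and `S ω i i = 0` with probability `1 - pr i`. -/
structure IsSamplingMatrix {Ω : Type} [MeasurableSpace Ω] (μ : MeasureTheory.Measure Ω)
    (p : ℝ) {n : ℕ} (pr : Fin n → ℝ) (S : Ω → Matrix (Fin n) (Fin n) ℝ) : Prop where
  offdiag : ∀ ω i j, i ≠ j → S ω i j = 0
  meas : ∀ i, Measurable fun ω => S ω i i
  prob_val : ∀ i, μ {ω | S ω i i = (pr i) ^ (-(1 / p))} = ENNReal.ofReal (pr i)
  prob_zero : ∀ i, μ {ω | S ω i i = 0} = ENNReal.ofReal (1 - pr i)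
  indep : ProbabilityTheory.iIndepFun (fun i ω => S ω i i) μ

/-! The lower bound on `S` over the column space of `A`, applied to `A (x̂_c - x_opt)` together with
the triangle inequality for the two sketched residuals, gives `‖A (x̂_c - x_opt)‖_p ≤ (8/7) · 6 Z`;
one more triangle inequality yields `‖A x̂_c - b‖_p ≤ Z + 48 Z / 7 ≤ 8 Z`. -/

open Matrix

lemma pnorm_nonneg (p : ℝ) {n : ℕ} (v : Fin n → ℝ) : 0 ≤ pnorm p v :=
  Real.rpow_nonneg (Finset.sum_nonneg fun _ _ => Real.rpow_nonneg (abs_nonneg _) _) _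

lemma pnorm_neg (p : ℝ) {n : ℕ} (v : Fin n → ℝ) : pnorm p (-v) = pnorm p v := by
  simp [pnorm]

lemma pnorm_add_le {p : ℝ} (hp : 1 ≤ p) {n : ℕ} (u v : Fin n → ℝ) :
    pnorm p (u + v) ≤ pnorm p u + pnorm p v := by
  simpa [pnorm] using Real.Lp_add_le Finset.univ u v hp

lemma pnorm_sub_le {p : ℝ} (hp : 1 ≤ p) {n : ℕ} (u v : Fin n → ℝ) :
    pnorm p (u - v) ≤ pnorm p u + pnorm p v := by
  simpa [sub_eq_add_neg, pnorm_neg] using pnorm_add_le hp u (-v)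

lemma pnorm_residual_le_of_sketch {p c α β : ℝ} (hp : 1 ≤ p) (hc : 0 < c) {n m k : ℕ}
    (A : Matrix (Fin n) (Fin m) ℝ) (b : Fin n → ℝ) (S : Matrix (Fin k) (Fin n) ℝ)
    (hlow : ∀ x, c * pnorm p (A *ᵥ x) ≤ pnorm p (S *ᵥ (A *ᵥ x)))
    {x y : Fin m → ℝ} (hx : pnorm p (S *ᵥ (A *ᵥ x - b)) ≤ α)
    (hy : pnorm p (S *ᵥ (A *ᵥ y - b)) ≤ β) :
    pnorm p (A *ᵥ x - b) ≤ pnorm p (A *ᵥ y - b) + (α + β) / c := by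
  have hdiff : A *ᵥ (x - y) = (A *ᵥ x - b) - (A *ᵥ y - b) := by
    rw [mulVec_sub]; abel
  have hsketch : c * pnorm p (A *ᵥ (x - y)) ≤ α + β :=
    calc c * pnorm p (A *ᵥ (x - y)) ≤ pnorm p (S *ᵥ (A *ᵥ (x - y))) := hlow _
      _ ≤ pnorm p (S *ᵥ (A *ᵥ x - b)) + pnorm p (S *ᵥ (A *ᵥ y - b)) := by
        rw [hdiff, mulVec_sub]; exact pnorm_sub_le hp _ _
      _ ≤ α + β := add_le_add hx hy
  calc pnorm p (A *ᵥ x - b) = pnorm p (A *ᵥ (x - y) + (A *ᵥ y - b)) := by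
        rw [hdiff, sub_add_cancel]
    _ ≤ pnorm p (A *ᵥ (x - y)) + pnorm p (A *ᵥ y - b) := pnorm_add_le hp _ _
    _ ≤ (α + β) / c + pnorm p (A *ᵥ y - b) := by
        gcongr; rw [le_div_iff₀ hc, mul_comm]; exact hsketch
    _ = pnorm p (A *ᵥ y - b) + (α + β) / c := add_comm _ _

theorem first_stage_const_approx_general {n m k : ℕ} (A : Matrix (Fin n) (Fin m) ℝ)
    (b : Fin n → ℝ) (S : Matrix (Fin k) (Fin n) ℝ) (p Z : ℝ)
    (xopt xc : Fin m → ℝ)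
    (hp : 1 ≤ p)
    (hZ : Z = pnorm p (A.mulVec xopt - b))
    (hlow : ∀ x : Fin m → ℝ, (7 / 8) * pnorm p (A.mulVec x) ≤ pnorm p (S.mulVec (A.mulVec x)))
    (hSopt : pnorm p (S.mulVec (A.mulVec xopt - b)) ≤ 3 * Z)
    (hSxc : pnorm p (S.mulVec (A.mulVec xc - b)) ≤ 3 * Z) :
    pnorm p (A.mulVec xc - b) ≤ 8 * Z := by
  have hZ0 : 0 ≤ Z := hZ ▸ pnorm_nonneg p _
  have h := pnorm_residual_le_of_sketch hp (by norm_num) A b S hlow hSxc hSopt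
  rw [← hZ] at h
  linarith

/-- **Lemma 2 (first stage): a good sampled solution is an 8-approximation.**
Let `Z = min_x ‖A x - b‖_p` be attained at `x_opt`.  Suppose `S` satisfies
`(7/8) ‖A x‖_p ≤ ‖S A x‖_p` for all `x` and `‖S (A x_opt - b)‖_p ≤ 3 Z`.  If
`‖S (A x̂_c - b)‖_p ≤ 3 Z`, then `‖A x̂_c - b‖_p ≤ 8 Z`. -/
theorem first_stage_const_approx {n m k : ℕ} (A : Matrix (Fin n) (Fin m) ℝ)
    (b : Fin n → ℝ) (S : Matrix (Fin k) (Fin n) ℝ) (p Z : ℝ)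
    (xopt xc : Fin m → ℝ)
    (hp : 1 ≤ p)
    (hZ : Z = pnorm p (A.mulVec xopt - b))
    (hopt : ∀ x : Fin m → ℝ, Z ≤ pnorm p (A.mulVec x - b))
    (hlow : ∀ x : Fin m → ℝ, (7 / 8) * pnorm p (A.mulVec x) ≤ pnorm p (S.mulVec (A.mulVec x)))
    (hSopt : pnorm p (S.mulVec (A.mulVec xopt - b)) ≤ 3 * Z)
    (hSxc : pnorm p (S.mulVec (A.mulVec xc - b)) ≤ 3 * Z) :
    pnorm p (A.mulVec xc - b) ≤ 8 * Z :=
  first_stage_const_approx_general A b S p Z xopt xc hp hZ hlow hSopt hSxc
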